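/- The non-context-free language L_abc = { a^n b^n c^{2n} : n ≥ 0 } belongs to 4SDA; consequently 4SDA is not contained in CFL. -/

import Mathlib

/-!
Formalization infrastructure for depth-`k` storage automata (k-sda's),
following T. Yamakami, "Between SC and LOGDCFL: Families of Languages
Accepted by Logarithmic-Space Deterministic Auxiliary Depth-k Storage
Automata".
-/

namespace SDAP

/-- Head directions. -/
inductive Dir | left | stay | right
deriving DecidableEq

/-- Input-tape symbols: the two endmarkers `▷`, `◁` or a genuine symbol. -/
inductive InSym (α : Type) | lend | rend | sym (a : α)

/-- Move a head position on a semi-infinite tape (clamped at `0`). -/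
def moveNat (p : ℕ) : Dir → ℕ
  | Dir.left => p - 1
  | Dir.stay => p
  | Dir.right => p + 1

/-- Move the input head, clamped to the segment `[0, n+1]` holding `▷ x ◁`. -/
def moveIn (n p : ℕ) (d : Dir) : ℕ := min (moveNat p d) (n + 1)

/-- Symbol at position `i` of the input tape holding `▷ x ◁`. -/
def inAt {α : Type} (x : List α) (i : ℕ) : InSym α :=
  if i = 0 then InSym.lend
  else if h : i - 1 < x.length then InSym.sym (x.get ⟨i - 1, h⟩)
  else InSym.rend

/-! ### One-way deterministic depth-`k` storage automata (k-sda's) -/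

/-- Output of one transition of a k-sda. -/
structure SDAOut (Q G : ℕ) where
  st : Fin Q
  wr : Fin G
  dIn : Dir
  dSt : Dir

/-- A one-way deterministic depth-`k` storage automaton: a read-once input
tape and a depth-`k` storage tape with storage alphabet `Fin G` graded by
the depth function `dv`. -/
structure SDA (k : ℕ) (α : Type) where
  Q : ℕ
  G : ℕ
  dv : Fin G → ℕ
  box : Fin G      -- the initial blank `□`, depth 0
  blank : Fin G    -- the frozen blank `B`, depth k
  lend : Fin G     -- the left endmarker `▷` of the storage tape, depth k
  q0 : Fin Q
  qacc : Finset (Fin Q)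
  qrej : Finset (Fin Q)
  δ : Fin Q → InSym α → Fin G → SDAOut Q G

namespace SDA

variable {k : ℕ} {α : Type}

structure Cfg (M : SDA k α) where
  st : Fin M.Q
  ip : ℕ
  sp : ℕ
  tape : ℕ → Fin M.G

def init (M : SDA k α) : M.Cfg :=
  ⟨M.q0, 0, 0, fun i => if i = 0 then M.lend else M.box⟩

def Halted (M : SDA k α) (c : M.Cfg) : Prop := c.st ∈ M.qacc ∨ c.st ∈ M.qrej

def step (M : SDA k α) (x : List α) (c : M.Cfg) : M.Cfg :=
  if c.st ∈ M.qacc ∨ c.st ∈ M.qrej then c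
  else
    let t := M.δ c.st (inAt x c.ip) (c.tape c.sp)
    ⟨t.st, moveIn x.length c.ip t.dIn, moveNat c.sp t.dSt,
      Function.update c.tape c.sp t.wr⟩

def run (M : SDA k α) (x : List α) (t : ℕ) : M.Cfg := (M.step x)^[t] M.init

def Accepts (M : SDA k α) (x : List α) : Prop := ∃ t, (M.run x t).st ∈ M.qacc

def Rejects (M : SDA k α) (x : List α) : Prop := ∃ t, (M.run x t).st ∈ M.qrej

def Halts (M : SDA k α) (x : List α) : Prop := ∃ t, M.Halted (M.run x t)

def Recognizes (M : SDA k α) (L : Language α) : Prop :=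
  ∀ x, (x ∈ L ↔ M.Accepts x) ∧ (x ∉ L ↔ M.Rejects x)

def lang (M : SDA k α) : Language α := {x | M.Accepts x}

/-- `M` halts within polynomial time on every input. -/
def PolyTime (M : SDA k α) : Prop :=
  ∃ c : ℕ, ∀ x : List α, ∃ t ≤ c * x.length ^ c + c, M.Halted (M.run x t)

/-- Structural well-formedness: graded storage alphabet, read-once
(one-way) input head, and the depth-`k` requirement on the storage tape
(passing through a symbol of depth `e < k` raises its depth by `1`, and
by `2` at a turn, capped at `k`; depth-`k` symbols are frozen). Because the
depth alphabets are mutually disjoint, the direction from which the head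
arrived is encoded in the parity of the depth. -/
def WellFormed (M : SDA k α) : Prop :=
  (∀ s, M.dv s ≤ k) ∧ M.dv M.box = 0 ∧ M.dv M.blank = k ∧ M.dv M.lend = k ∧
  M.blank ≠ M.lend ∧
  ∀ q σ γ,
    ((M.δ q σ γ).dIn ≠ Dir.left) ∧
    ((M.δ q σ γ).wr = M.lend ↔ γ = M.lend) ∧
    (γ = M.lend → (M.δ q σ γ).dSt ≠ Dir.left) ∧
    (M.dv γ = k → (M.δ q σ γ).wr = γ) ∧
    ((M.δ q σ γ).dSt = Dir.stay → (M.δ q σ γ).wr = γ) ∧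
    (M.dv γ < k → (M.δ q σ γ).dSt = Dir.right →
      M.dv (M.δ q σ γ).wr = min (M.dv γ + if Even (M.dv γ) then 1 else 2) k) ∧
    (M.dv γ < k → (M.δ q σ γ).dSt = Dir.left →
      M.dv (M.δ q σ γ).wr = min (M.dv γ + if Even (M.dv γ) then 2 else 1) k) ∧
    (M.dv (M.δ q σ γ).wr = k → (M.δ q σ γ).wr = M.lend ∨ (M.δ q σ γ).wr = M.blank)

/-- Depth-susceptibility: while scanning a storage symbol of depth
`≥ k-1` the input head is stationary, and while scanning the frozen
blank the inner state does not change. -/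
def DepthSusceptible (M : SDA k α) : Prop :=
  ∀ q σ γ,
    (k - 1 ≤ M.dv γ → (M.δ q σ γ).dIn = Dir.stay) ∧
    (γ = M.blank → (M.δ q σ γ).st = q)

end SDA

/-- The family `kSDA` of languages recognized by depth-susceptible k-sda's. -/
def kSDA (k : ℕ) (α : Type) : Set (Language α) :=
  {L | ∃ M : SDA k α, M.WellFormed ∧ M.DepthSusceptible ∧ M.Recognizes L}

/-- The family `kSDA_imm` of languages recognized by polynomial-time
depth-immune k-sda's (no behavioral restriction at high-depth symbols). -/
def kSDAimm (k : ℕ) (α : Type) : Set (Language α) :=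
  {L | ∃ M : SDA k α, M.WellFormed ∧ M.PolyTime ∧ M.Recognizes L}

/-! ### One-way deterministic pushdown automata and DCFL -/

/-- A deterministic pushdown automaton (acceptance by final state with the
whole input consumed). `δε` gives ε-moves, `δ` gives reading moves; on a
transition the top stack symbol is replaced by a string. -/
structure DPDA (α : Type) where
  Q : ℕ
  G : ℕ
  q0 : Fin Q
  Z0 : Fin G
  qacc : Finset (Fin Q)
  δε : Fin Q → Fin G → Option (Fin Q × List (Fin G))
  δ : Fin Q → α → Fin G → Option (Fin Q × List (Fin G))

namespace DPDA

variable {α : Type}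

structure Cfg (P : DPDA α) where
  st : Fin P.Q
  input : List α
  stack : List (Fin P.G)

def init (P : DPDA α) (x : List α) : P.Cfg := ⟨P.q0, x, [P.Z0]⟩

def step (P : DPDA α) (c : P.Cfg) : P.Cfg :=
  match c.stack with
  | [] => c
  | Z :: ζ =>
    match P.δε c.st Z with
    | some (p, γ) => ⟨p, c.input, γ ++ ζ⟩
    | none =>
      match c.input with
      | [] => c
      | a :: w =>
        match P.δ c.st a Z with
        | some (p, γ) => ⟨p, w, γ ++ ζ⟩
        | none => c

/-- Determinism: an ε-move and a reading move are never both available. -/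
def Deterministic (P : DPDA α) : Prop :=
  ∀ q Z, (P.δε q Z).isSome → ∀ a, P.δ q a Z = none

def Accepts (P : DPDA α) (x : List α) : Prop :=
  ∃ t, (P.step^[t] (P.init x)).input = [] ∧ (P.step^[t] (P.init x)).st ∈ P.qacc

end DPDA

/-- The deterministic context-free languages. -/
def DCFL (α : Type) : Set (Language α) :=
  {L | ∃ P : DPDA α, P.Deterministic ∧ ∀ x, x ∈ L ↔ P.Accepts x}

/-! ### Offline deterministic Turing machines; SC^k and P -/

structure TMOut (Q W : ℕ) where
  st : Fin Q
  wr : Fin W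
  dIn : Dir
  dW : Dir

/-- A deterministic Turing machine with a two-way read-only input tape and
one semi-infinite rewritable work tape. -/
structure OffTM (α : Type) where
  Q : ℕ
  W : ℕ
  q0 : Fin Q
  blank : Fin W
  qacc : Finset (Fin Q)
  qrej : Finset (Fin Q)
  δ : Fin Q → InSym α → Fin W → TMOut Q W

namespace OffTM

variable {α : Type}

structure Cfg (M : OffTM α) where
  st : Fin M.Q
  ip : ℕ
  wp : ℕ
  w : ℕ → Fin M.W

def init (M : OffTM α) : M.Cfg := ⟨M.q0, 0, 0, fun _ => M.blank⟩

def Halted (M : OffTM α) (c : M.Cfg) : Prop := c.st ∈ M.qacc ∨ c.st ∈ M.qrej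

def step (M : OffTM α) (x : List α) (c : M.Cfg) : M.Cfg :=
  if c.st ∈ M.qacc ∨ c.st ∈ M.qrej then c
  else
    let t := M.δ c.st (inAt x c.ip) (c.w c.wp)
    ⟨t.st, moveIn x.length c.ip t.dIn, moveNat c.wp t.dW,
      Function.update c.w c.wp t.wr⟩

def run (M : OffTM α) (x : List α) (t : ℕ) : M.Cfg := (M.step x)^[t] M.init

def Accepts (M : OffTM α) (x : List α) : Prop := ∃ t, (M.run x t).st ∈ M.qacc

end OffTM

/-- Steve's class `SC^k`: languages decided by deterministic Turing machines
simultaneously in polynomial time and `O(log^k n)` space. -/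
def SCk (k : ℕ) (α : Type) : Set (Language α) :=
  {L | ∃ M : OffTM α, ∃ c : ℕ,
    (∀ x : List α, ∃ t ≤ c * x.length ^ c + c, M.Halted (M.run x t)) ∧
    (∀ x, x ∈ L ↔ M.Accepts x) ∧
    (∀ (x : List α) (t : ℕ), (M.run x t).wp + 1 ≤ c * (Nat.log 2 x.length) ^ k + c)}

/-- `SC = ⋃_{k ≥ 1} SC^k`. -/
def SC (α : Type) : Set (Language α) := {L | ∃ k, 1 ≤ k ∧ L ∈ SCk k α}

/-- Polynomial time. -/
def Pclass (α : Type) : Set (Language α) :=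
  {L | ∃ M : OffTM α, ∃ c : ℕ,
    (∀ x : List α, ∃ t ≤ c * x.length ^ c + c, M.Halted (M.run x t)) ∧
    (∀ x, x ∈ L ↔ M.Accepts x)}

/-! ### Function transducers; FL and logspace many-one reductions -/

structure TTMOut (Q W : ℕ) (β : Type) where
  st : Fin Q
  wr : Fin W
  dIn : Dir
  dW : Dir
  out : Option β

/-- A deterministic Turing machine computing a function: a two-way read-only
input tape, one work tape, and a write-once output tape. -/
structure TransTM (α β : Type) where
  Q : ℕ
  W : ℕ
  q0 : Fin Q
  blank : Fin W
  qhalt : Finset (Fin Q)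
  δ : Fin Q → InSym α → Fin W → TTMOut Q W β

namespace TransTM

variable {α β : Type}

structure Cfg (M : TransTM α β) where
  st : Fin M.Q
  ip : ℕ
  wp : ℕ
  w : ℕ → Fin M.W
  out : List β

def init (M : TransTM α β) : M.Cfg := ⟨M.q0, 0, 0, fun _ => M.blank, []⟩

def step (M : TransTM α β) (x : List α) (c : M.Cfg) : M.Cfg :=
  if c.st ∈ M.qhalt then c
  else
    let t := M.δ c.st (inAt x c.ip) (c.w c.wp)
    ⟨t.st, moveIn x.length c.ip t.dIn, moveNat c.wp t.dW,
      Function.update c.w c.wp t.wr, c.out ++ t.out.toList⟩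

def run (M : TransTM α β) (x : List α) (t : ℕ) : M.Cfg := (M.step x)^[t] M.init

def Computes (M : TransTM α β) (f : List α → List β) : Prop :=
  ∀ x, ∃ t, (M.run x t).st ∈ M.qhalt ∧ (M.run x t).out = f x

def PolyTime (M : TransTM α β) : Prop :=
  ∃ c : ℕ, ∀ x : List α, ∃ t ≤ c * x.length ^ c + c, (M.run x t).st ∈ M.qhalt

def LogSpace (M : TransTM α β) : Prop :=
  ∃ c : ℕ, ∀ (x : List α) (t : ℕ), (M.run x t).wp + 1 ≤ c * Nat.log 2 x.length + c

end TransTM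

/-- `FL`: functions computable in polynomial time and `O(log n)` space. -/
def InFL {α β : Type} (f : List α → List β) : Prop :=
  ∃ M : TransTM α β, M.Computes f ∧ M.PolyTime ∧ M.LogSpace

/-- Logarithmic-space many-one reducibility `≤^L_m`. -/
def LmRed {α β : Type} (L₁ : Language α) (L₂ : Language β) : Prop :=
  ∃ f : List α → List β, InFL f ∧ ∀ x, x ∈ L₁ ↔ f x ∈ L₂

/-- `LOGkSDA`: the closure of `kSDA` under `≤^L_m` (targets over a finite
alphabet, w.l.o.g. `Fin m`). -/
def LOGkSDA (k : ℕ) (α : Type) : Set (Language α) :=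
  {A | ∃ m : ℕ, ∃ B ∈ kSDA k (Fin m), LmRed A B}

/-- `LOGkSDA_imm`: the closure of `kSDA_imm` under `≤^L_m`. -/
def LOGkSDAimm (k : ℕ) (α : Type) : Set (Language α) :=
  {A | ∃ m : ℕ, ∃ B ∈ kSDAimm k (Fin m), LmRed A B}

/-- `LOGDCFL`: the closure of `DCFL` under `≤^L_m`. -/
def LOGDCFL (α : Type) : Set (Language α) :=
  {A | ∃ m : ℕ, ∃ B ∈ DCFL (Fin m), LmRed A B}

/-! ### Deterministic auxiliary depth-`k` storage automata -/

structure AuxOut (Q W G : ℕ) where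
  st : Fin Q
  wrW : Fin W
  wrG : Fin G
  dIn : Dir
  dW : Dir
  dSt : Dir

/-- A deterministic auxiliary depth-`k` storage automaton: a two-way
read-only input tape, a rewritable auxiliary work tape, and a depth-`k`
storage tape. -/
structure AuxSDA (k : ℕ) (α : Type) where
  Q : ℕ
  W : ℕ
  G : ℕ
  dv : Fin G → ℕ
  box : Fin G
  blank : Fin G
  lend : Fin G
  wblank : Fin W
  q0 : Fin Q
  qacc : Finset (Fin Q)
  qrej : Finset (Fin Q)
  δ : Fin Q → InSym α → Fin W → Fin G → AuxOut Q W G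

namespace AuxSDA

variable {k : ℕ} {α : Type}

structure Cfg (M : AuxSDA k α) where
  st : Fin M.Q
  ip : ℕ
  wp : ℕ
  sp : ℕ
  w : ℕ → Fin M.W
  tape : ℕ → Fin M.G

def init (M : AuxSDA k α) : M.Cfg :=
  ⟨M.q0, 0, 0, 0, fun _ => M.wblank, fun i => if i = 0 then M.lend else M.box⟩

def Halted (M : AuxSDA k α) (c : M.Cfg) : Prop := c.st ∈ M.qacc ∨ c.st ∈ M.qrej

def step (M : AuxSDA k α) (x : List α) (c : M.Cfg) : M.Cfg :=
  if c.st ∈ M.qacc ∨ c.st ∈ M.qrej then c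
  else
    let t := M.δ c.st (inAt x c.ip) (c.w c.wp) (c.tape c.sp)
    ⟨t.st, moveIn x.length c.ip t.dIn, moveNat c.wp t.dW, moveNat c.sp t.dSt,
      Function.update c.w c.wp t.wrW, Function.update c.tape c.sp t.wrG⟩

def run (M : AuxSDA k α) (x : List α) (t : ℕ) : M.Cfg := (M.step x)^[t] M.init

def Accepts (M : AuxSDA k α) (x : List α) : Prop := ∃ t, (M.run x t).st ∈ M.qacc

def Rejects (M : AuxSDA k α) (x : List α) : Prop := ∃ t, (M.run x t).st ∈ M.qrej

def Recognizes (M : AuxSDA k α) (L : Language α) : Prop :=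
  ∀ x, (x ∈ L ↔ M.Accepts x) ∧ (x ∉ L ↔ M.Rejects x)

def PolyTime (M : AuxSDA k α) : Prop :=
  ∃ c : ℕ, ∀ x : List α, ∃ t ≤ c * x.length ^ c + c, M.Halted (M.run x t)

/-- The auxiliary work tape uses only `O(log n)` cells. -/
def LogSpace (M : AuxSDA k α) : Prop :=
  ∃ c : ℕ, ∀ (x : List α) (t : ℕ), (M.run x t).wp + 1 ≤ c * Nat.log 2 x.length + c

/-- Structural well-formedness: the depth-`k` requirement on the storage
tape and the stationary requirement. -/
def WellFormed (M : AuxSDA k α) : Prop :=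
  (∀ s, M.dv s ≤ k) ∧ M.dv M.box = 0 ∧ M.dv M.blank = k ∧ M.dv M.lend = k ∧
  M.blank ≠ M.lend ∧
  ∀ q σ τ γ,
    ((M.δ q σ τ γ).wrG = M.lend ↔ γ = M.lend) ∧
    (γ = M.lend → (M.δ q σ τ γ).dSt ≠ Dir.left) ∧
    (M.dv γ = k → (M.δ q σ τ γ).wrG = γ) ∧
    ((M.δ q σ τ γ).dSt = Dir.stay → (M.δ q σ τ γ).wrG = γ) ∧
    ((M.δ q σ τ γ).dW = Dir.stay → (M.δ q σ τ γ).wrW = τ) ∧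
    (M.dv γ < k → (M.δ q σ τ γ).dSt = Dir.right →
      M.dv (M.δ q σ τ γ).wrG = min (M.dv γ + if Even (M.dv γ) then 1 else 2) k) ∧
    (M.dv γ < k → (M.δ q σ τ γ).dSt = Dir.left →
      M.dv (M.δ q σ τ γ).wrG = min (M.dv γ + if Even (M.dv γ) then 2 else 1) k) ∧
    (M.dv (M.δ q σ τ γ).wrG = k →
      (M.δ q σ τ γ).wrG = M.lend ∨ (M.δ q σ τ γ).wrG = M.blank)

/-- Depth-susceptibility for auxiliary machines: while scanning a storage
symbol of depth `≥ k-1`, both the input head and the auxiliary head are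
stationary; while scanning the frozen blank, the inner state is unchanged. -/
def DepthSusceptible (M : AuxSDA k α) : Prop :=
  ∀ q σ τ γ,
    (k - 1 ≤ M.dv γ → (M.δ q σ τ γ).dIn = Dir.stay ∧ (M.δ q σ τ γ).dW = Dir.stay) ∧
    (γ = M.blank → (M.δ q σ τ γ).st = q)

end AuxSDA

/-! ### Two-way multi-head deterministic depth-`k` storage automata -/

structure MOut (Q G ℓ : ℕ) where
  st : Fin Q
  wr : Fin G
  dIn : Fin ℓ → Dir
  dSt : Dir

/-- A two-way `ℓ`-head deterministic depth-`k` storage automaton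
(`k`-sda₂(ℓ)): `ℓ` two-way read-only input heads and one depth-`k`
storage tape. -/
structure MSDA (k ℓ : ℕ) (α : Type) where
  Q : ℕ
  G : ℕ
  dv : Fin G → ℕ
  box : Fin G
  blank : Fin G
  lend : Fin G
  q0 : Fin Q
  qacc : Finset (Fin Q)
  qrej : Finset (Fin Q)
  δ : Fin Q → (Fin ℓ → InSym α) → Fin G → MOut Q G ℓ

namespace MSDA

variable {k ℓ : ℕ} {α : Type}

structure Cfg (M : MSDA k ℓ α) where
  st : Fin M.Q
  ips : Fin ℓ → ℕ
  sp : ℕ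
  tape : ℕ → Fin M.G

def init (M : MSDA k ℓ α) : M.Cfg :=
  ⟨M.q0, fun _ => 0, 0, fun i => if i = 0 then M.lend else M.box⟩

def Halted (M : MSDA k ℓ α) (c : M.Cfg) : Prop := c.st ∈ M.qacc ∨ c.st ∈ M.qrej

def step (M : MSDA k ℓ α) (x : List α) (c : M.Cfg) : M.Cfg :=
  if c.st ∈ M.qacc ∨ c.st ∈ M.qrej then c
  else
    let t := M.δ c.st (fun i => inAt x (c.ips i)) (c.tape c.sp)
    ⟨t.st, fun i => moveIn x.length (c.ips i) (t.dIn i), moveNat c.sp t.dSt,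
      Function.update c.tape c.sp t.wr⟩

def run (M : MSDA k ℓ α) (x : List α) (t : ℕ) : M.Cfg := (M.step x)^[t] M.init

def Accepts (M : MSDA k ℓ α) (x : List α) : Prop := ∃ t, (M.run x t).st ∈ M.qacc

def Rejects (M : MSDA k ℓ α) (x : List α) : Prop := ∃ t, (M.run x t).st ∈ M.qrej

def Halts (M : MSDA k ℓ α) (x : List α) : Prop := ∃ t, M.Halted (M.run x t)

def Recognizes (M : MSDA k ℓ α) (L : Language α) : Prop :=
  ∀ x, (x ∈ L ↔ M.Accepts x) ∧ (x ∉ L ↔ M.Rejects x)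

def PolyTime (M : MSDA k ℓ α) : Prop :=
  ∃ c : ℕ, ∀ x : List α, ∃ t ≤ c * x.length ^ c + c, M.Halted (M.run x t)

def WellFormed (M : MSDA k ℓ α) : Prop :=
  (∀ s, M.dv s ≤ k) ∧ M.dv M.box = 0 ∧ M.dv M.blank = k ∧ M.dv M.lend = k ∧
  M.blank ≠ M.lend ∧
  ∀ q σ γ,
    ((M.δ q σ γ).wr = M.lend ↔ γ = M.lend) ∧
    (γ = M.lend → (M.δ q σ γ).dSt ≠ Dir.left) ∧
    (M.dv γ = k → (M.δ q σ γ).wr = γ) ∧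
    ((M.δ q σ γ).dSt = Dir.stay → (M.δ q σ γ).wr = γ) ∧
    (M.dv γ < k → (M.δ q σ γ).dSt = Dir.right →
      M.dv (M.δ q σ γ).wr = min (M.dv γ + if Even (M.dv γ) then 1 else 2) k) ∧
    (M.dv γ < k → (M.δ q σ γ).dSt = Dir.left →
      M.dv (M.δ q σ γ).wr = min (M.dv γ + if Even (M.dv γ) then 2 else 1) k) ∧
    (M.dv (M.δ q σ γ).wr = k → (M.δ q σ γ).wr = M.lend ∨ (M.δ q σ γ).wr = M.blank)

/-- Depth-susceptibility: all input heads are stationary while the storage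
head scans a symbol of depth `≥ k-1`, and the state is unchanged while
scanning the frozen blank. -/
def DepthSusceptible (M : MSDA k ℓ α) : Prop :=
  ∀ q σ γ,
    (k - 1 ≤ M.dv γ → ∀ i, (M.δ q σ γ).dIn i = Dir.stay) ∧
    (γ = M.blank → (M.δ q σ γ).st = q)

/-- Head `h` is a counter head: the transition function ignores the symbol
it scans, and the storage-tape head stays still whenever head `h` moves. -/
def CounterHead (M : MSDA k ℓ α) (h : Fin ℓ) : Prop :=
  (∀ q σ σ' γ, (∀ i, i ≠ h → σ i = σ' i) → M.δ q σ γ = M.δ q σ' γ) ∧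
  (∀ q σ γ, (M.δ q σ γ).dIn h ≠ Dir.stay → (M.δ q σ γ).dSt = Dir.stay)

/-- Head `h` never moves to the left. -/
def OneWayHead (M : MSDA k ℓ α) (h : Fin ℓ) : Prop :=
  ∀ q σ γ, (M.δ q σ γ).dIn h ≠ Dir.left

end MSDA

/-- `kSDA₂(ℓ)`: languages recognized in polynomial time by depth-immune
two-way `ℓ`-head deterministic depth-`k` storage automata. -/
def kSDA2 (k ℓ : ℕ) (α : Type) : Set (Language α) :=
  {L | ∃ M : MSDA k ℓ α, M.WellFormed ∧ M.PolyTime ∧ M.Recognizes L}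

/-! ### Hibbard's deterministic k-limited automata -/

structure LDAOut (Q G : ℕ) where
  st : Fin Q
  wr : Fin G
  d : Dir

/-- A deterministic `k`-limited automaton: a single-tape two-way machine
whose tape initially holds `▷ x ◁`; each cell may be rewritten only during
its first `k` visits (a turn counts twice), tracked by the graded tape
alphabet. -/
structure LDA (k : ℕ) (α : Type) where
  Q : ℕ
  G : ℕ
  dv : Fin G → ℕ
  embed : α → Fin G     -- input symbols, of depth 0
  lend : Fin G          -- `▷`, frozen
  rend : Fin G          -- `◁`, frozen
  q0 : Fin Q
  qacc : Finset (Fin Q)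
  qrej : Finset (Fin Q)
  δ : Fin Q → Fin G → LDAOut Q G

namespace LDA

variable {k : ℕ} {α : Type}

structure Cfg (M : LDA k α) where
  st : Fin M.Q
  p : ℕ
  tape : ℕ → Fin M.G

def init (M : LDA k α) (x : List α) : M.Cfg :=
  ⟨M.q0, 0, fun i =>
    if i = 0 then M.lend
    else if h : i - 1 < x.length then M.embed (x.get ⟨i - 1, h⟩)
    else M.rend⟩

def Halted (M : LDA k α) (c : M.Cfg) : Prop := c.st ∈ M.qacc ∨ c.st ∈ M.qrej

def step (M : LDA k α) (c : M.Cfg) : M.Cfg :=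
  if c.st ∈ M.qacc ∨ c.st ∈ M.qrej then c
  else
    let t := M.δ c.st (c.tape c.p)
    ⟨t.st, moveNat c.p t.d, Function.update c.tape c.p t.wr⟩

def run (M : LDA k α) (x : List α) (t : ℕ) : M.Cfg := M.step^[t] (M.init x)

def Accepts (M : LDA k α) (x : List α) : Prop := ∃ t, (M.run x t).st ∈ M.qacc

def Rejects (M : LDA k α) (x : List α) : Prop := ∃ t, (M.run x t).st ∈ M.qrej

def Recognizes (M : LDA k α) (L : Language α) : Prop :=
  ∀ x, (x ∈ L ↔ M.Accepts x) ∧ (x ∉ L ↔ M.Rejects x)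

def WellFormed (M : LDA k α) : Prop :=
  (∀ s, M.dv s ≤ k) ∧ (∀ a, M.dv (M.embed a) = 0) ∧
  M.dv M.lend = k ∧ M.dv M.rend = k ∧ M.lend ≠ M.rend ∧
  ∀ q γ,
    ((M.δ q γ).wr = M.lend ↔ γ = M.lend) ∧
    ((M.δ q γ).wr = M.rend ↔ γ = M.rend) ∧
    (γ = M.lend → (M.δ q γ).d ≠ Dir.left) ∧
    (γ = M.rend → (M.δ q γ).d ≠ Dir.right) ∧
    (M.dv γ = k → (M.δ q γ).wr = γ) ∧
    ((M.δ q γ).d = Dir.stay → (M.δ q γ).wr = γ) ∧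
    (M.dv γ < k → (M.δ q γ).d = Dir.right →
      M.dv (M.δ q γ).wr = min (M.dv γ + if Even (M.dv γ) then 1 else 2) k) ∧
    (M.dv γ < k → (M.δ q γ).d = Dir.left →
      M.dv (M.δ q γ).wr = min (M.dv γ + if Even (M.dv γ) then 2 else 1) k)

end LDA

/-! ### Encodings of k-sda's and the membership problem MEMB_k -/

/-- An encoding scheme: a map sending every depth-susceptible k-sda over an
alphabet `Fin a` together with an input to a binary string. -/
def EncInjective {k : ℕ}
    (enc : (a : ℕ) → SDA k (Fin a) → List (Fin a) → List Bool) : Prop :=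
  Function.Injective
    (fun p : (a : ℕ) × (SDA k (Fin a) × List (Fin a)) => enc p.1 p.2.1 p.2.2)

/-- The membership problem `MEMB_k` relative to an encoding scheme. -/
def MEMB (k : ℕ)
    (enc : (a : ℕ) → SDA k (Fin a) → List (Fin a) → List Bool) : Language Bool :=
  {y | ∃ (a : ℕ) (M : SDA k (Fin a)) (x : List (Fin a)),
    M.WellFormed ∧ M.DepthSusceptible ∧ y = enc a M x ∧ M.Accepts x}

end SDAP

open SDAP

/-- `L_abc = { a^n b^n c^{2n} | n ≥ 0 }` over the alphabet `{a,b,c} = Fin 3`. -/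
def Labc : Language (Fin 3) :=
  {w | ∃ n : ℕ, w = List.replicate n 0 ++ List.replicate n 1 ++ List.replicate (2 * n) 2}

/-!
The machine reads `a^n b^m c^l`, marking one fresh storage cell per `a` while moving right. At
the first `b` it writes an end marker and turns, converting one marked cell per `b` while
walking back to `▷`; there it turns again and walks right over the converted cells, consuming two
`c`'s per cell. It accepts exactly when the end marker is reached at `◁`. Every storage cell is
crossed right, left, right, so it never reaches depth `4`, and the input head only moves while
it scans cells of depth at most `2`, as depth-susceptibility demands.

`L_abc` is not context-free by the pumping lemma: pumping a long word `x u y v z` once and twice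
inside `L_abc` forces `u ++ v` to contain the letters `a, b, c` in ratio `1 : 1 : 2`, whereas in
the sorted word `x u u y v v z` each of `u` and `v` consists of a single letter. The pumping
lemma follows a heaviest path in a parse tree: every step of it that is produced with a nonempty
context strictly shrinks the set of nonterminals enclosed by the current one, unless some
nonterminal encloses itself.
-/

theorem List.exists_eq_replicate_append {α : Type*} [DecidableEq α] (a : α) (x : List α) :
    ∃ n y, x = List.replicate n a ++ y ∧ y.head? ≠ some a := by
  induction x with
  | nil => exact ⟨0, [], rfl, by simp⟩
  | cons b x ih =>
    by_cases hb : b = a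
    · obtain ⟨n, y, rfl, hy⟩ := ih
      exact ⟨n + 1, y, by simp [hb, List.replicate_succ], hy⟩
    · exact ⟨0, b :: x, rfl, by simpa using hb⟩

theorem List.eq_of_mem_of_pairwise_append_self {α : Type*} [PartialOrder α] {l : List α}
    (h : (l ++ l).Pairwise (· ≤ ·)) {a b : α} (ha : a ∈ l) (hb : b ∈ l) : a = b :=
  have hle := (List.pairwise_append.1 h).2.2
  le_antisymm (hle a ha b hb) (hle b hb a ha)

namespace SDAP

theorem moveIn_right {n p : ℕ} (h : p ≤ n) : moveIn n p .right = p + 1 := by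
  simp only [moveIn, moveNat]; omega

theorem moveIn_stay {n p : ℕ} (h : p ≤ n + 1) : moveIn n p .stay = p := by
  simp only [moveIn, moveNat]; omega

theorem inAt_replicate_append {α : Type} {n i : ℕ} {a : α} (v : List α) (h₁ : 1 ≤ i) (h₂ : i ≤ n) :
    inAt (List.replicate n a ++ v) i = .sym a := by
  simp [inAt, show i ≠ 0 by omega, show i - 1 < n + v.length by omega,
    List.getElem_append_left (show i - 1 < (List.replicate n a).length by simp; omega)]

theorem inAt_replicate_append_add {α : Type} {n i : ℕ} {a : α} (v : List α) (hi : i ≠ 0) :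
    inAt (List.replicate n a ++ v) (n + i) = inAt v i := by
  simp only [inAt, List.length_append, List.length_replicate, List.get_eq_getElem]
  rw [if_neg (by omega), if_neg hi]
  by_cases h : i - 1 < v.length
  · rw [dif_pos (by omega), dif_pos h, List.getElem_append_right (by simp; omega)]
    simp only [List.length_replicate]
    congr 2
    omega
  · rw [dif_neg (by omega), dif_neg h]

theorem inAt_one_ne_sym {α : Type} {v : List α} {a : α} (h : v.head? ≠ some a) :
    inAt v 1 ≠ .sym a := by
  cases v <;> simp_all [inAt]

def InSym.equivOption (α : Type) : InSym α ≃ Option (Option α) where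
  toFun
    | .lend => none
    | .rend => some none
    | .sym a => some (some a)
  invFun
    | none => .lend
    | some none => .rend
    | some (some a) => .sym a
  left_inv σ := by cases σ <;> rfl
  right_inv o := by rcases o with _ | _ | a <;> rfl

instance {α : Type} [DecidableEq α] : DecidableEq (InSym α) := (InSym.equivOption α).decidableEq

instance {α : Type} [Fintype α] : Fintype (InSym α) := Fintype.ofEquiv _ (InSym.equivOption α).symm

end SDAP

namespace SDAP.SDA

variable {k : ℕ} {α : Type} {M : SDA k α} {x : List α}

def Reaches (M : SDA k α) (x : List α) (c c' : M.Cfg) : Prop := ∃ t, (M.step x)^[t] c = c'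

theorem step_of_not_halted {c : M.Cfg} (h : ¬M.Halted c) :
    M.step x c = ⟨(M.δ c.st (inAt x c.ip) (c.tape c.sp)).st,
      moveIn x.length c.ip (M.δ c.st (inAt x c.ip) (c.tape c.sp)).dIn,
      moveNat c.sp (M.δ c.st (inAt x c.ip) (c.tape c.sp)).dSt,
      Function.update c.tape c.sp (M.δ c.st (inAt x c.ip) (c.tape c.sp)).wr⟩ :=
  if_neg h

namespace Reaches

theorem trans {c₁ c₂ c₃ : M.Cfg} (h₁ : M.Reaches x c₁ c₂) (h₂ : M.Reaches x c₂ c₃) :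
    M.Reaches x c₁ c₃ := by
  obtain ⟨t₁, rfl⟩ := h₁
  obtain ⟨t₂, rfl⟩ := h₂
  exact ⟨t₂ + t₁, Function.iterate_add_apply ..⟩

theorem step {q q' : Fin M.Q} {ip sp ip' sp' : ℕ} {T T' : ℕ → Fin M.G} {σ : InSym α}
    {γ γ' : Fin M.G} {dIn dSt : Dir} (hq : ¬M.Halted ⟨q, ip, sp, T⟩) (hσ : inAt x ip = σ)
    (hγ : T sp = γ) (hδ : M.δ q σ γ = ⟨q', γ', dIn, dSt⟩) (hip : moveIn x.length ip dIn = ip')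
    (hsp : moveNat sp dSt = sp') (hT : Function.update T sp γ' = T') :
    M.Reaches x ⟨q, ip, sp, T⟩ ⟨q', ip', sp', T'⟩ := by
  refine ⟨1, ?_⟩
  subst hσ hγ hip hsp hT
  rw [Function.iterate_one, step_of_not_halted hq]
  simp only [hδ]

end Reaches

theorem step_of_halted {c : M.Cfg} (h : M.Halted c) : M.step x c = c := if_pos h

theorem run_add_of_halted {t : ℕ} (h : M.Halted (M.run x t)) (s : ℕ) :
    M.run x (t + s) = M.run x t := by
  induction s with
  | zero => rfl
  | succ s ih =>
    rw [← add_assoc, run, Function.iterate_succ_apply', ← run, ih, step_of_halted h]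

theorem not_rejects_of_accepts (hM : Disjoint M.qacc M.qrej) (ha : M.Accepts x) :
    ¬M.Rejects x := by
  rintro ⟨t₂, h₂⟩
  obtain ⟨t₁, h₁⟩ := ha
  rcases le_total t₁ t₂ with h | h
  · obtain ⟨s, rfl⟩ := Nat.exists_eq_add_of_le h
    rw [run_add_of_halted (Or.inl h₁)] at h₂
    exact Finset.disjoint_left.1 hM h₁ h₂
  · obtain ⟨s, rfl⟩ := Nat.exists_eq_add_of_le h
    rw [run_add_of_halted (Or.inr h₂)] at h₁
    exact Finset.disjoint_left.1 hM h₁ h₂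

theorem recognizes_of_accepts_of_rejects {L : Language α} (hM : Disjoint M.qacc M.qrej)
    (hacc : ∀ x ∈ L, M.Accepts x) (hrej : ∀ x ∉ L, M.Rejects x) : M.Recognizes L := by
  intro x
  exact ⟨⟨hacc x, fun ha => by_contra fun hx => not_rejects_of_accepts hM ha (hrej x hx)⟩,
    ⟨hrej x, fun hr hx => not_rejects_of_accepts hM (hacc x hx) hr⟩⟩

theorem accepts_of_reaches {c : M.Cfg} (h : M.Reaches x M.init c) (hc : ¬M.Halted c)
    (hδ : (M.δ c.st (inAt x c.ip) (c.tape c.sp)).st ∈ M.qacc) : M.Accepts x := by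
  obtain ⟨t, ht⟩ := h
  refine ⟨t + 1, ?_⟩
  rw [run, Function.iterate_succ_apply', ht, step_of_not_halted hc]
  exact hδ

theorem rejects_of_reaches {c : M.Cfg} (h : M.Reaches x M.init c) (hc : ¬M.Halted c)
    (hδ : (M.δ c.st (inAt x c.ip) (c.tape c.sp)).st ∈ M.qrej) : M.Rejects x := by
  obtain ⟨t, ht⟩ := h
  refine ⟨t + 1, ?_⟩
  rw [run, Function.iterate_succ_apply', ht, step_of_not_halted hc]
  exact hδ

end SDAP.SDA

namespace ContextFreeGrammar

variable {T : Type*} {g : ContextFreeGrammar T}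

/-- `g.DerivesWithin n u w`: the string `u` derives the word `w` through a parse forest of
height at most `n`. -/
inductive DerivesWithin (g : ContextFreeGrammar T) : ℕ → List (Symbol T g.NT) → List T → Prop
  | nil (n : ℕ) : DerivesWithin g n [] []
  | terminal {n : ℕ} {a : T} {u : List (Symbol T g.NT)} {w : List T}
      (h : DerivesWithin g n u w) : DerivesWithin g n (.terminal a :: u) (a :: w)
  | nonterminal {n : ℕ} {r : ContextFreeRule T g.NT} {u : List (Symbol T g.NT)} {v w : List T}
      (hr : r ∈ g.rules) (hv : DerivesWithin g n r.output v) (hw : DerivesWithin g (n + 1) u w) :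
      DerivesWithin g (n + 1) (.nonterminal r.input :: u) (v ++ w)

namespace DerivesWithin

variable {n : ℕ} {u u₁ u₂ : List (Symbol T g.NT)} {w w₁ w₂ : List T}

theorem eq_nil (h : g.DerivesWithin n [] w) : w = [] := by
  cases h; rfl

theorem eq_singleton_of_terminal {a : T} (h : g.DerivesWithin n [.terminal a] w) : w = [a] := by
  cases h with
  | terminal h => rw [h.eq_nil]

theorem exists_rule_of_nonterminal {B : g.NT} (h : g.DerivesWithin n [.nonterminal B] w) :
    ∃ k, ∃ r ∈ g.rules, n = k + 1 ∧ r.input = B ∧ g.DerivesWithin k r.output w := by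
  cases h with
  | nonterminal hr hv hw => exact ⟨_, _, hr, rfl, rfl, by simpa [hw.eq_nil] using hv⟩

theorem mono (h : g.DerivesWithin n u w) {m : ℕ} (hnm : n ≤ m) : g.DerivesWithin m u w := by
  induction h generalizing m with
  | nil => exact .nil m
  | terminal _ ih => exact .terminal (ih hnm)
  | nonterminal hr _ _ ihv ihw =>
    obtain ⟨m, rfl⟩ := Nat.exists_eq_add_of_lt hnm
    exact .nonterminal hr (ihv (by omega)) (ihw (by omega))

theorem append (h₁ : g.DerivesWithin n u₁ w₁) (h₂ : g.DerivesWithin n u₂ w₂) :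
    g.DerivesWithin n (u₁ ++ u₂) (w₁ ++ w₂) := by
  induction h₁ with
  | nil => simpa using h₂
  | terminal _ ih => exact .terminal (ih h₂)
  | nonterminal hr hv _ _ ihw => simpa using .nonterminal hr hv (ihw h₂)

theorem exists_split (h : g.DerivesWithin n (u₁ ++ u₂) w) :
    ∃ w₁ w₂, w = w₁ ++ w₂ ∧ g.DerivesWithin n u₁ w₁ ∧ g.DerivesWithin n u₂ w₂ := by
  induction u₁ generalizing n w with
  | nil => exact ⟨[], w, rfl, .nil n, h⟩
  | cons s u₁ ih =>
    cases h with
    | terminal h =>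
      obtain ⟨w₁, w₂, rfl, h₁, h₂⟩ := ih h
      exact ⟨_ :: w₁, w₂, rfl, .terminal h₁, h₂⟩
    | nonterminal hr hv hw =>
      obtain ⟨w₁, w₂, rfl, h₁, h₂⟩ := ih hw
      exact ⟨_ ++ w₁, w₂, (List.append_assoc ..).symm, .nonterminal hr hv h₁, h₂⟩

theorem map_terminal (w : List T) : g.DerivesWithin 0 (w.map .terminal) w := by
  induction w with
  | nil => exact .nil 0
  | cons a w ih => exact .terminal ih

theorem derives (h : g.DerivesWithin n u w) : g.Derives u (w.map .terminal) := by
  induction h with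
  | nil => exact .refl _
  | terminal _ ih => simpa using ih.append_left [.terminal _]
  | @nonterminal n r u v w hr _ _ ihv ihw =>
    refine Produces.trans_derives ⟨r, hr, .head u⟩ ?_
    rw [List.map_append]
    exact (ihv.append_right u).trans (ihw.append_left _)

theorem exists_heavy_symbol (h : g.DerivesWithin n u w) (hw : w ≠ []) :
    ∃ p s q wp ws wq, u = p ++ s :: q ∧ w = wp ++ ws ++ wq ∧ g.DerivesWithin n p wp ∧
      g.DerivesWithin n [s] ws ∧ g.DerivesWithin n q wq ∧ w.length ≤ u.length * ws.length := by
  induction u generalizing w with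
  | nil => exact absurd h.eq_nil hw
  | cons s u ih =>
    obtain ⟨w₁, w₂, rfl, h₁, h₂⟩ := (show g.DerivesWithin n ([s] ++ u) w from h).exists_split
    rcases eq_or_ne w₂ [] with rfl | hw₂
    · refine ⟨[], s, u, [], w₁, [], rfl, by simp, .nil n, h₁, h₂, ?_⟩
      simp only [List.append_nil, List.length_cons]
      nlinarith
    obtain ⟨p, s', q, wp, ws, wq, rfl, rfl, hp, hs, hq, hlen⟩ := ih h₂ hw₂
    by_cases hle : w₁.length ≤ ws.length
    · refine ⟨s :: p, s', q, w₁ ++ wp, ws, wq, rfl, by simp, h₁.append hp, hs, hq, ?_⟩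
      simp only [List.length_append, List.length_cons] at hlen ⊢
      nlinarith
    · refine ⟨[], s, p ++ s' :: q, [], w₁, wp ++ ws ++ wq, rfl, by simp, .nil n, h₁,
        by simpa using hp.append (hs.append hq), ?_⟩
      simp only [List.length_append, List.length_cons] at hlen ⊢
      nlinarith

end DerivesWithin

theorem Derives.exists_derivesWithin {u : List (Symbol T g.NT)} {w : List T}
    (h : g.Derives u (w.map .terminal)) : ∃ n, g.DerivesWithin n u w := by
  induction h using Relation.ReflTransGen.head_induction_on with
  | refl => exact ⟨0, .map_terminal w⟩
  | head hstep _ ih =>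
    obtain ⟨n, h⟩ := ih
    obtain ⟨r, hr, hrw⟩ := hstep
    obtain ⟨p, q, rfl, rfl⟩ := hrw.exists_parts
    rw [List.append_assoc] at h
    obtain ⟨wp, wrq, rfl, hp, hrq⟩ := h.exists_split
    obtain ⟨wr, wq, rfl, hr', hq⟩ := hrq.exists_split
    have hA : g.DerivesWithin (n + 1) [.nonterminal r.input] wr := by
      simpa using DerivesWithin.nonterminal hr hr' (.nil (n + 1))
    refine ⟨n + 1, ?_⟩
    simpa using ((hp.mono n.le_succ).append hA).append (hq.mono n.le_succ)

def DerivesAround (g : ContextFreeGrammar T) (B : g.NT) (x z : List T) (C : g.NT) : Prop :=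
  g.Derives [.nonterminal B] (x.map .terminal ++ [.nonterminal C] ++ z.map .terminal)

namespace DerivesAround

variable {B C D : g.NT} {x z u v : List T}

theorem refl (B : g.NT) : g.DerivesAround B [] [] B := by
  simpa [DerivesAround] using Derives.refl _

theorem trans (h₁ : g.DerivesAround B x z C) (h₂ : g.DerivesAround C u v D) :
    g.DerivesAround B (x ++ u) (v ++ z) D := by
  refine Derives.trans h₁ ?_
  simpa using (h₂.append_right (z.map .terminal)).append_left (x.map .terminal)

theorem pow (h : g.DerivesAround C u v C) (i : ℕ) :
    g.DerivesAround C (List.replicate i u).flatten (List.replicate i v).flatten C := by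
  induction i with
  | zero => exact refl C
  | succ i ih =>
    convert ih.trans h using 2
    · simp [List.replicate_succ']
    · simp [List.replicate_succ]

theorem derives {y : List T} (h : g.DerivesAround B x z C)
    (hC : g.Derives [.nonterminal C] (y.map .terminal)) :
    g.Derives [.nonterminal B] ((x ++ y ++ z).map .terminal) := by
  refine Derives.trans h ?_
  simpa using (hC.append_right (z.map .terminal)).append_left (x.map .terminal)

end DerivesAround

def Encloses (g : ContextFreeGrammar T) (B C : g.NT) : Prop :=
  ∃ x z, (x ≠ [] ∨ z ≠ []) ∧ g.DerivesAround B x z C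

theorem DerivesAround.trans_encloses {B C D : g.NT} {x z : List T} (h₁ : g.DerivesAround B x z C)
    (h₂ : g.Encloses C D) : g.Encloses B D := by
  obtain ⟨u, v, huv, h₂⟩ := h₂
  exact ⟨x ++ u, v ++ z, by rcases huv with h | h <;> simp [h], h₁.trans h₂⟩

theorem Encloses.trans {B C D : g.NT} (h₁ : g.Encloses B C) (h₂ : g.Encloses C D) :
    g.Encloses B D := by
  obtain ⟨x, z, -, h₁⟩ := h₁
  exact h₁.trans_encloses h₂

open Classical in
noncomputable def enclosedSet (g : ContextFreeGrammar T) (B : g.NT) : Finset g.NT :=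
  (g.rules.image ContextFreeRule.input).filter (g.Encloses B)

theorem mem_enclosedSet {B C : g.NT} :
    C ∈ g.enclosedSet B ↔ (∃ r ∈ g.rules, r.input = C) ∧ g.Encloses B C := by
  classical
  simp [enclosedSet]

theorem card_enclosedSet_le (B : g.NT) : (g.enclosedSet B).card ≤ g.rules.card := by
  classical
  exact (Finset.card_filter_le _ _).trans Finset.card_image_le

def maxOutputLength (g : ContextFreeGrammar T) : ℕ := g.rules.sup fun r => r.output.length

theorem length_output_le {r : ContextFreeRule T g.NT} (hr : r ∈ g.rules) :
    r.output.length ≤ g.maxOutputLength :=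
  Finset.le_sup (f := fun r => r.output.length) hr

namespace DerivesWithin

variable {n : ℕ} {w : List T}

theorem exists_encloses {B : g.NT} (h : g.DerivesWithin n [.nonterminal B] w)
    (hw : g.maxOutputLength < w.length) :
    ∃ C w', g.Encloses B C ∧ (∃ m, g.DerivesWithin m [.nonterminal C] w') ∧
      w.length ≤ g.maxOutputLength * w'.length := by
  induction n generalizing B w with
  | zero => obtain ⟨k, r, -, hk, -⟩ := h.exists_rule_of_nonterminal; omega
  | succ n ih =>
    obtain ⟨k, r, hr, hk, rfl, hout⟩ := h.exists_rule_of_nonterminal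
    obtain rfl : k = n := by omega
    obtain ⟨p, s, q, wp, ws, wq, hu, rfl, hp, hs, hq, hlen⟩ :=
      hout.exists_heavy_symbol (by rintro rfl; simp at hw)
    replace hlen := hlen.trans (Nat.mul_le_mul_right ws.length (length_output_le hr))
    cases s with
    | terminal a =>
      obtain rfl := hs.eq_singleton_of_terminal
      simp only [List.length_append, List.length_singleton, mul_one] at hlen hw
      omega
    | nonterminal C =>
      have hBC : g.DerivesAround r.input wp wq C := by
        refine Produces.trans_derives ⟨r, hr, .input_output⟩ ?_
        rw [hu]
        simpa [DerivesAround] using (hp.derives.append_right (.nonterminal C :: q)).trans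
          ((hq.derives.append_left [.nonterminal C]).append_left (wp.map .terminal))
      by_cases hctx : wp ≠ [] ∨ wq ≠ []
      · exact ⟨C, ws, ⟨wp, wq, hctx, hBC⟩, ⟨_, hs⟩, hlen⟩
      · obtain ⟨rfl, rfl⟩ : wp = [] ∧ wq = [] := by tauto
        obtain ⟨D, w', hCD, hD, hlenD⟩ := ih hs (by simpa using hw)
        exact ⟨D, w', hBC.trans_encloses hCD, hD, by simpa using hlenD⟩

theorem exists_selfEnclosing {B : g.NT} (h : g.DerivesWithin n [.nonterminal B] w) {k : ℕ}
    (hk : (g.enclosedSet B).card ≤ k) (hw : g.maxOutputLength ^ (k + 1) < w.length) :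
    ∃ C x z, ∃ y : List T, g.DerivesAround B x z C ∧ g.Encloses C C ∧
      g.Derives [.nonterminal C] (y.map .terminal) := by
  induction k using Nat.strong_induction_on generalizing B n w with | _ k ih =>
  obtain ⟨C, w', hBC, ⟨m, hC⟩, hlen⟩ :=
    h.exists_encloses ((Nat.le_self_pow k.succ_ne_zero _).trans_lt hw)
  have hCB : C ∈ g.enclosedSet B := by
    obtain ⟨_, r, hr, -, rfl, -⟩ := hC.exists_rule_of_nonterminal
    exact mem_enclosedSet.2 ⟨⟨r, hr, rfl⟩, hBC⟩
  by_cases hCC : g.Encloses C C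
  · obtain ⟨x, z, -, hBC'⟩ := hBC
    exact ⟨C, x, z, w', hBC', hCC, hC.derives⟩
  -- the enclosed set loses `C`, which pays for the drop of `w'.length` by `maxOutputLength`
  have hsub : g.enclosedSet C ⊂ g.enclosedSet B := by
    refine Finset.ssubset_iff_of_subset (fun D hD => ?_) |>.2 ⟨C, hCB, fun h => hCC ?_⟩
    · exact mem_enclosedSet.2 ⟨(mem_enclosedSet.1 hD).1, hBC.trans (mem_enclosedSet.1 hD).2⟩
    · exact (mem_enclosedSet.1 h).2
  have hCk := (Finset.card_lt_card hsub).trans_le hk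
  obtain ⟨k, rfl⟩ : ∃ k', k = k' + 1 := ⟨k - 1, by omega⟩
  have hw' : g.maxOutputLength ^ (k + 1) < w'.length := by
    refine Nat.lt_of_mul_lt_mul_left (a := g.maxOutputLength) ?_
    rw [← pow_succ']
    exact hw.trans_le hlen
  obtain ⟨x, z, -, hBC'⟩ := hBC
  obtain ⟨D, u, v, y, hCD, hDD, hD⟩ := ih k (by omega) hC (by omega) hw'
  exact ⟨D, x ++ u, v ++ z, y, hBC'.trans hCD, hDD, hD⟩

end DerivesWithin

theorem exists_pumping {w : List T} (hw : w ∈ g.language)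
    (hlen : g.maxOutputLength ^ (g.rules.card + 1) < w.length) :
    ∃ x u y v z : List T, (u ≠ [] ∨ v ≠ []) ∧ ∀ i : ℕ,
      x ++ (List.replicate i u).flatten ++ y ++ (List.replicate i v).flatten ++ z ∈ g.language := by
  obtain ⟨n, h⟩ := Derives.exists_derivesWithin hw
  obtain ⟨C, x, z, y, hSC, ⟨u, v, huv, hCC⟩, hC⟩ :=
    h.exists_selfEnclosing (card_enclosedSet_le g.initial) hlen
  refine ⟨x, u, y, v, z, huv, fun i => ?_⟩
  simpa using (hSC.trans (hCC.pow i)).derives hC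

end ContextFreeGrammar

theorem Language.IsContextFree.exists_pumping {T : Type*} {L : Language T}
    (hL : L.IsContextFree) (hlong : ∀ N, ∃ w ∈ L, N < w.length) :
    ∃ x u y v z : List T, (u ≠ [] ∨ v ≠ []) ∧ ∀ i : ℕ,
      x ++ (List.replicate i u).flatten ++ y ++ (List.replicate i v).flatten ++ z ∈ L := by
  obtain ⟨g, rfl⟩ := hL
  obtain ⟨w, hw, hlen⟩ := hlong (g.maxOutputLength ^ (g.rules.card + 1))
  exact ContextFreeGrammar.exists_pumping hw hlen

namespace Labc

open SDA

/- States: `0` before any `a`, `1` reading `a`'s, `2` reading `b`'s, `3`/`4` reading the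
first/second `c` of a pair, `5` accept, `6` reject. Storage symbols, with their depths:
`0 = □` (0), `1` an `a`-cell (1), `2` an `a`-cell matched by a `b` (2), `3` the end marker (2),
`4` a cell matched by two `c`'s (3), `5 = B` (4), `6 = ▷` (4). -/
def transition : Fin 7 → InSym (Fin 3) → Fin 7 → SDAOut 7 7
  | 0, _, 6 => ⟨0, 6, .stay, .right⟩
  | 0, .lend, 0 => ⟨0, 0, .right, .stay⟩
  | 0, .sym 0, 0 => ⟨1, 1, .right, .right⟩
  | 0, .sym 1, 0 => ⟨2, 3, .stay, .left⟩
  | 0, .sym 2, 0 => ⟨6, 0, .stay, .stay⟩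
  | 0, .rend, 0 => ⟨5, 0, .stay, .stay⟩
  | 1, .sym 0, 0 => ⟨1, 1, .right, .right⟩
  | 1, .sym 1, 0 => ⟨2, 3, .stay, .left⟩
  | 1, .sym 2, 0 => ⟨6, 0, .stay, .stay⟩
  | 1, .rend, 0 => ⟨6, 0, .stay, .stay⟩
  | 2, .sym 1, 1 => ⟨2, 2, .right, .left⟩
  | 2, _, 1 => ⟨6, 1, .stay, .stay⟩
  | 2, .sym 2, 6 => ⟨3, 6, .stay, .right⟩
  | 2, _, 6 => ⟨6, 6, .stay, .stay⟩
  | 3, .sym 2, 2 => ⟨4, 2, .right, .stay⟩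
  | 3, _, 2 => ⟨6, 2, .stay, .stay⟩
  | 3, .rend, 3 => ⟨5, 3, .stay, .stay⟩
  | 3, _, 3 => ⟨6, 3, .stay, .stay⟩
  | 4, .sym 2, 2 => ⟨3, 4, .right, .right⟩
  | 4, _, 2 => ⟨6, 2, .stay, .stay⟩
  | q, _, 5 => ⟨q, 5, .stay, .stay⟩
  | _, _, γ => ⟨6, γ, .stay, .stay⟩

-- reducible, so that numerals typecheck in `Fin sda.Q` and `Fin sda.G`
abbrev sda : SDA 4 (Fin 3) where
  Q := 7
  G := 7
  dv := ![0, 1, 2, 2, 3, 4, 4]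
  box := 0
  blank := 5
  lend := 6
  q0 := 0
  qacc := {5}
  qrej := {6}
  δ := transition

theorem sda_wellFormed : sda.WellFormed := by
  unfold SDA.WellFormed; decide

theorem sda_depthSusceptible : sda.DepthSusceptible := by
  unfold SDA.DepthSusceptible; decide

section

variable {x : List (Fin 3)} {q : Fin 7} {ip sp : ℕ} {T : ℕ → Fin 7}

theorem not_halted (hq : q.val < 5) : ¬sda.Halted ⟨q, ip, sp, T⟩ := by
  rintro (h | h) <;> obtain rfl : q = _ := Finset.mem_singleton.1 h <;> simp at hq

theorem rejects_of_transition (h : sda.Reaches x sda.init ⟨q, ip, sp, T⟩) (hq : q.val < 5)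
    (hδ : (transition q (inAt x ip) (T sp)).st = 6) : sda.Rejects x :=
  SDA.rejects_of_reaches h (not_halted hq) (Finset.mem_singleton.2 hδ)

theorem accepts_of_transition (h : sda.Reaches x sda.init ⟨q, ip, sp, T⟩) (hq : q.val < 5)
    (hδ : (transition q (inAt x ip) (T sp)).st = 5) : sda.Accepts x :=
  SDA.accepts_of_reaches h (not_halted hq) (Finset.mem_singleton.2 hδ)

end

def blocks (n m l : ℕ) (w : List (Fin 3)) : List (Fin 3) :=
  List.replicate n 0 ++ (List.replicate m 1 ++ (List.replicate l 2 ++ w))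

section blocks

variable {n m l i : ℕ} {w : List (Fin 3)}

theorem length_blocks : (blocks n m l w).length = n + m + l + w.length := by
  simp [blocks]; omega

theorem inAt_blocks_of_le_a (h₁ : 1 ≤ i) (h₂ : i ≤ n) : inAt (blocks n m l w) i = .sym 0 :=
  inAt_replicate_append _ h₁ h₂

theorem inAt_blocks_of_le_b (h₁ : n < i) (h₂ : i ≤ n + m) : inAt (blocks n m l w) i = .sym 1 := by
  obtain ⟨j, rfl⟩ := Nat.exists_eq_add_of_lt h₁
  rw [blocks, add_assoc, inAt_replicate_append_add _ (by omega),
    inAt_replicate_append _ (by omega) (by omega)]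

theorem inAt_blocks_of_le_c (h₁ : n + m < i) (h₂ : i ≤ n + m + l) :
    inAt (blocks n m l w) i = .sym 2 := by
  obtain ⟨j, rfl⟩ := Nat.exists_eq_add_of_lt h₁
  rw [blocks, add_assoc, add_assoc, inAt_replicate_append_add _ (by omega),
    inAt_replicate_append_add _ (by omega), inAt_replicate_append _ (by omega) (by omega)]

theorem inAt_blocks_after_b (h : i = n + m + 1) :
    inAt (blocks n m l w) i = inAt (List.replicate l 2 ++ w) 1 := by
  rw [h, blocks, add_assoc, inAt_replicate_append_add _ (by omega),
    inAt_replicate_append_add _ (by omega)]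

theorem inAt_blocks_after_c (h : i = n + m + l + 1) : inAt (blocks n m l w) i = inAt w 1 := by
  rw [h, blocks, add_assoc, add_assoc, inAt_replicate_append_add _ (by omega),
    inAt_replicate_append_add _ (by omega), inAt_replicate_append_add _ (by omega)]

end blocks

def tapeA (j : ℕ) : ℕ → Fin 7 := fun i => if i = 0 then 6 else if i ≤ j then 1 else 0

def tapeB (p n : ℕ) : ℕ → Fin 7 := fun i =>
  if i = 0 then 6 else if i ≤ p then 1 else if i ≤ n then 2 else if i = n + 1 then 3 else 0

def tapeC (p n : ℕ) : ℕ → Fin 7 := fun i =>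
  if i = 0 then 6 else if i < p then 4 else if i ≤ n then 2 else if i = n + 1 then 3 else 0

section tapes

variable {j p n : ℕ}

theorem init_eq : sda.init = ⟨0, 0, 0, tapeA 0⟩ := by
  simp only [SDA.init, SDA.Cfg.mk.injEq, true_and]
  funext i
  simp only [tapeA]
  split_ifs <;> first | rfl | omega

theorem tapeA_succ : tapeA j (j + 1) = 0 := by simp [tapeA]

theorem update_tapeA : Function.update (tapeA j) (j + 1) 1 = tapeA (j + 1) := by
  funext i
  simp only [tapeA, Function.update_apply]
  split_ifs <;> first | rfl | omega

theorem update_tapeA_eq_tapeB : Function.update (tapeA n) (n + 1) 3 = tapeB n n := by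
  funext i
  simp only [tapeA, tapeB, Function.update_apply]
  split_ifs <;> first | rfl | omega

theorem tapeB_self (h : 1 ≤ p) : tapeB p n p = 1 := by
  simp only [tapeB]
  split_ifs <;> first | rfl | omega

theorem update_tapeB (h₁ : 1 ≤ p) (h₂ : p ≤ n) :
    Function.update (tapeB p n) p 2 = tapeB (p - 1) n := by
  funext i
  simp only [tapeB, Function.update_apply]
  split_ifs <;> first | rfl | omega

theorem tapeB_zero_eq_tapeC : tapeB 0 n = tapeC 1 n := by
  funext i
  simp only [tapeB, tapeC]
  split_ifs <;> first | rfl | omega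

theorem tapeC_self (h₁ : 1 ≤ p) (h₂ : p ≤ n) : tapeC p n p = 2 := by
  simp only [tapeC]
  split_ifs <;> first | rfl | omega

theorem tapeC_succ_self : tapeC (n + 1) n (n + 1) = 3 := by
  simp [tapeC]

theorem update_tapeC (h : 1 ≤ p) : Function.update (tapeC p n) p 4 = tapeC (p + 1) n := by
  funext i
  simp only [tapeC, Function.update_apply]
  split_ifs <;> first | rfl | omega

end tapes

-- the state after `j` `a`'s: only state `0` accepts at `◁`
def stateA (j : ℕ) : Fin 7 := if j = 0 then 0 else 1

theorem stateA_lt (j : ℕ) : (stateA j).val < 5 := by unfold stateA; split_ifs <;> decide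

theorem transition_stateA_a (j : ℕ) :
    transition (stateA j) (.sym 0) 0 = ⟨1, 1, .right, .right⟩ := by
  unfold stateA; split_ifs <;> rfl

theorem transition_stateA_b (j : ℕ) : transition (stateA j) (.sym 1) 0 = ⟨2, 3, .stay, .left⟩ := by
  unfold stateA; split_ifs <;> rfl

theorem transition_stateA_c (j : ℕ) : (transition (stateA j) (.sym 2) 0).st = 6 := by
  unfold stateA; split_ifs <;> rfl

variable {n m l : ℕ} {w : List (Fin 3)}

theorem reaches_phaseA {j : ℕ} (hj : j ≤ n) :
    sda.Reaches (blocks n m l w) sda.init ⟨stateA j, j + 1, j + 1, tapeA j⟩ := by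
  induction j with
  | zero =>
    rw [init_eq]
    refine Reaches.trans (c₂ := ⟨0, 0, 1, tapeA 0⟩) ?_ ?_
    · exact Reaches.step (not_halted (by decide)) rfl rfl rfl (moveIn_stay (by omega)) rfl
        (Function.update_eq_self_iff.2 rfl)
    · exact Reaches.step (not_halted (by decide)) rfl rfl rfl (moveIn_right (by omega)) rfl
        (Function.update_eq_self_iff.2 rfl)
  | succ j ih =>
    exact (ih (by omega)).trans (Reaches.step (not_halted (stateA_lt j))
      (inAt_blocks_of_le_a (by omega) hj) tapeA_succ (transition_stateA_a j)
      (moveIn_right (by rw [length_blocks]; omega)) rfl update_tapeA)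

theorem reaches_phaseB (hm : 1 ≤ m) {d : ℕ} (hdm : d ≤ m) (hdn : d ≤ n) :
    sda.Reaches (blocks n m l w) sda.init ⟨2, n + 1 + d, n - d, tapeB (n - d) n⟩ := by
  induction d with
  | zero =>
    exact (reaches_phaseA le_rfl).trans (Reaches.step (not_halted (stateA_lt n))
      (inAt_blocks_of_le_b (by omega) (by omega)) tapeA_succ (transition_stateA_b n)
      (moveIn_stay (by rw [length_blocks]; omega)) rfl update_tapeA_eq_tapeB)
  | succ d ih =>
    refine (ih (by omega) (by omega)).trans (Reaches.step (not_halted (by decide))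
      (inAt_blocks_of_le_b (by omega) (by omega)) (tapeB_self (by omega)) rfl
      (moveIn_right (by rw [length_blocks]; omega)) ?_ ?_)
    · simp only [moveNat]; omega
    · rw [update_tapeB (by omega) (by omega), Nat.sub_sub]

theorem reaches_phaseC_start (hn : 1 ≤ n) (hl : 1 ≤ l) :
    sda.Reaches (blocks n n l w) sda.init ⟨3, 2 * n + 1, 1, tapeC 1 n⟩ := by
  have h := reaches_phaseB (l := l) (w := w) hn le_rfl le_rfl
  rw [Nat.sub_self] at h
  refine h.trans (Reaches.step (not_halted (by decide)) (inAt_blocks_of_le_c (by omega) (by omega))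
    rfl rfl ?_ rfl ?_)
  · rw [moveIn_stay (by rw [length_blocks]; omega)]; omega
  · exact (Function.update_eq_self_iff.2 rfl).trans tapeB_zero_eq_tapeC

theorem reaches_phaseC_first {d : ℕ} (hdl : 2 * d < l) (hdn : d < n) :
    sda.Reaches (blocks n n l w) ⟨3, 2 * n + 1 + 2 * d, d + 1, tapeC (d + 1) n⟩
      ⟨4, 2 * n + 1 + 2 * d + 1, d + 1, tapeC (d + 1) n⟩ :=
  Reaches.step (not_halted (by decide)) (inAt_blocks_of_le_c (by omega) (by omega))
    (tapeC_self (by omega) (by omega)) rfl (moveIn_right (by rw [length_blocks]; omega)) rfl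
    (Function.update_eq_self_iff.2 (tapeC_self (by omega) (by omega)).symm)

theorem reaches_phaseC_second {d : ℕ} (hdl : 2 * d + 1 < l) (hdn : d < n) :
    sda.Reaches (blocks n n l w) ⟨4, 2 * n + 1 + 2 * d + 1, d + 1, tapeC (d + 1) n⟩
      ⟨3, 2 * n + 1 + 2 * (d + 1), d + 1 + 1, tapeC (d + 1 + 1) n⟩ :=
  Reaches.step (not_halted (by decide)) (inAt_blocks_of_le_c (by omega) (by omega))
    (tapeC_self (by omega) (by omega)) rfl (moveIn_right (by rw [length_blocks]; omega)) rfl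
    (update_tapeC (by omega))

theorem reaches_phaseC (hn : 1 ≤ n) {d : ℕ} (hdl : 2 * d ≤ l) (hl : 1 ≤ l) (hdn : d ≤ n) :
    sda.Reaches (blocks n n l w) sda.init ⟨3, 2 * n + 1 + 2 * d, d + 1, tapeC (d + 1) n⟩ := by
  induction d with
  | zero => exact reaches_phaseC_start hn hl
  | succ d ih =>
    exact ((ih (by omega) (by omega)).trans (reaches_phaseC_first (by omega) (by omega))).trans
      (reaches_phaseC_second (by omega) (by omega))

variable {n m l : ℕ} {w : List (Fin 3)}

theorem accepts_blocks_zero : sda.Accepts (blocks 0 0 0 []) :=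
  accepts_of_transition (reaches_phaseA (j := 0) le_rfl) (by decide) rfl

theorem accepts_blocks (hn : 1 ≤ n) : sda.Accepts (blocks n n (2 * n) []) :=
  accepts_of_transition (reaches_phaseC hn le_rfl (by omega) le_rfl) (by decide)
    (by rw [tapeC_succ_self, inAt_blocks_after_c (by omega)]; rfl)

theorem rejects_blocks_of_only_a (hn : n ≠ 0) : sda.Rejects (blocks n 0 0 []) :=
  rejects_of_transition (reaches_phaseA le_rfl) (stateA_lt n)
    (by rw [inAt_blocks_after_c (by omega), tapeA_succ, stateA, if_neg hn]; rfl)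

theorem rejects_blocks_of_no_b (hl : 1 ≤ l) : sda.Rejects (blocks n 0 l w) :=
  rejects_of_transition (reaches_phaseA le_rfl) (stateA_lt n)
    (by rw [inAt_blocks_of_le_c (by omega) (by omega), tapeA_succ, transition_stateA_c])

theorem rejects_blocks_of_lt (hm : 1 ≤ m) (hmn : m < n)
    (hb : (List.replicate l 2 ++ w).head? ≠ some 1) : sda.Rejects (blocks n m l w) := by
  refine rejects_of_transition (reaches_phaseB hm le_rfl hmn.le) (by decide) ?_
  rw [tapeB_self (by omega), inAt_blocks_after_b (by omega)]
  exact (by decide : ∀ σ : InSym (Fin 3), σ ≠ .sym 1 → (transition 2 σ 1).st = 6) _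
    (inAt_one_ne_sym hb)

theorem rejects_blocks_of_gt (hnm : n < m) : sda.Rejects (blocks n m l w) := by
  have h := reaches_phaseB (l := l) (w := w) (by omega) hnm.le le_rfl
  rw [Nat.sub_self] at h
  exact rejects_of_transition h (by decide) (by rw [inAt_blocks_of_le_b (by omega) (by omega)]; rfl)

theorem rejects_blocks_of_no_c (hn : 1 ≤ n) (hc : w.head? ≠ some 2) :
    sda.Rejects (blocks n n 0 w) := by
  have h := reaches_phaseB (l := 0) (w := w) hn le_rfl le_rfl
  rw [Nat.sub_self] at h
  refine rejects_of_transition h (by decide) ?_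
  rw [inAt_blocks_after_c (by omega)]
  exact (by decide : ∀ σ : InSym (Fin 3), σ ≠ .sym 2 → (transition 2 σ 6).st = 6) _
    (inAt_one_ne_sym hc)

theorem rejects_blocks_of_few_c (hn : 1 ≤ n) (hl : 1 ≤ l) (hln : l < 2 * n)
    (hc : w.head? ≠ some 2) : sda.Rejects (blocks n n l w) := by
  have hσ := inAt_one_ne_sym hc
  obtain ⟨d, rfl | rfl⟩ := Nat.even_or_odd' l
  · refine rejects_of_transition (reaches_phaseC hn le_rfl hl (by omega)) (by decide) ?_
    rw [tapeC_self (by omega) (by omega), inAt_blocks_after_c (by omega)]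
    exact (by decide : ∀ σ : InSym (Fin 3), σ ≠ .sym 2 → (transition 3 σ 2).st = 6) _ hσ
  · refine rejects_of_transition ((reaches_phaseC hn (d := d) (by omega) hl (by omega)).trans
      (reaches_phaseC_first (by omega) (by omega))) (by decide) ?_
    rw [tapeC_self (by omega) (by omega), inAt_blocks_after_c (by omega)]
    exact (by decide : ∀ σ : InSym (Fin 3), σ ≠ .sym 2 → (transition 4 σ 2).st = 6) _ hσ

theorem rejects_blocks_of_tail (hn : 1 ≤ n) (hw : w ≠ []) :
    sda.Rejects (blocks n n (2 * n) w) := by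
  obtain ⟨a, w, rfl⟩ := List.exists_cons_of_ne_nil hw
  refine rejects_of_transition (reaches_phaseC hn le_rfl (by omega) le_rfl) (by decide) ?_
  rw [tapeC_succ_self, inAt_blocks_after_c (by omega)]
  exact (by decide : ∀ a : Fin 3, (transition 3 (.sym a) 3).st = 6) a

theorem rejects_blocks_of_many_c (hn : 1 ≤ n) (hl : 2 * n < l) :
    sda.Rejects (blocks n n l w) :=
  rejects_of_transition (reaches_phaseC hn (by omega) (by omega) le_rfl) (by decide)
    (by rw [tapeC_succ_self, inAt_blocks_of_le_c (by omega) (by omega)]; rfl)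

theorem exists_blocks (x : List (Fin 3)) :
    ∃ n m l w, x = blocks n m l w ∧
      (List.replicate m 1 ++ (List.replicate l 2 ++ w)).head? ≠ some 0 ∧
      (List.replicate l 2 ++ w).head? ≠ some 1 ∧ w.head? ≠ some 2 := by
  obtain ⟨n, y, rfl, hy⟩ := x.exists_eq_replicate_append 0
  obtain ⟨m, z, rfl, hz⟩ := y.exists_eq_replicate_append 1
  obtain ⟨l, w, rfl, hw⟩ := z.exists_eq_replicate_append 2
  exact ⟨n, m, l, w, rfl, hy, hz, hw⟩

theorem sda_accepts_of_mem {x : List (Fin 3)} (hx : x ∈ Labc) : sda.Accepts x := by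
  obtain ⟨n, rfl⟩ := hx
  rw [show List.replicate n 0 ++ List.replicate n 1 ++ List.replicate (2 * n) 2 =
    blocks n n (2 * n) [] by simp [blocks]]
  rcases Nat.eq_zero_or_pos n with rfl | hn
  · exact accepts_blocks_zero
  · exact accepts_blocks hn

theorem sda_rejects_of_not_mem {x : List (Fin 3)} (hx : x ∉ Labc) : sda.Rejects x := by
  obtain ⟨n, m, l, w, rfl, ha, hb, hc⟩ := exists_blocks x
  have hbad : ¬(m = n ∧ l = 2 * n ∧ w = []) := by
    rintro ⟨rfl, rfl, rfl⟩
    exact hx ⟨m, by simp [blocks]⟩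
  rcases Nat.eq_zero_or_pos m with rfl | hm
  · rcases Nat.eq_zero_or_pos l with rfl | hl
    · obtain rfl : w = [] := by
        cases w with
        | nil => rfl
        | cons a w => fin_cases a <;> simp_all
      exact rejects_blocks_of_only_a (by rintro rfl; exact hbad ⟨rfl, rfl, rfl⟩)
    · exact rejects_blocks_of_no_b hl
  rcases lt_trichotomy m n with h | rfl | h
  · exact rejects_blocks_of_lt hm h hb
  · rcases lt_trichotomy l (2 * m) with h | rfl | h
    · rcases Nat.eq_zero_or_pos l with rfl | hl
      · exact rejects_blocks_of_no_c hm hc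
      · exact rejects_blocks_of_few_c hm hl h hc
    · exact rejects_blocks_of_tail hm fun hw => hbad ⟨rfl, rfl, hw⟩
    · exact rejects_blocks_of_many_c hm h
  · exact rejects_blocks_of_gt h

theorem sda_recognizes : sda.Recognizes Labc :=
  SDA.recognizes_of_accepts_of_rejects (by decide) (fun _ => sda_accepts_of_mem)
    (fun _ => sda_rejects_of_not_mem)

theorem mem_kSDA : Labc ∈ kSDA 4 (Fin 3) :=
  ⟨sda, sda_wellFormed, sda_depthSusceptible, sda_recognizes⟩

theorem exists_mem_length_gt (N : ℕ) : ∃ w ∈ Labc, N < w.length :=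
  ⟨_, ⟨N + 1, rfl⟩, by simp; omega⟩

theorem count_and_sorted_of_mem {w : List (Fin 3)} (hw : w ∈ Labc) :
    ∃ n, w.count 0 = n ∧ w.count 1 = n ∧ w.count 2 = 2 * n ∧ w.Pairwise (· ≤ ·) := by
  obtain ⟨n, rfl⟩ := hw
  refine ⟨n, by simp [List.count_replicate], by simp [List.count_replicate],
    by simp [List.count_replicate], ?_⟩
  simp only [List.pairwise_append, List.pairwise_replicate, List.mem_append, List.mem_replicate]
  grind

theorem not_isContextFree : ¬ Labc.IsContextFree := by
  intro hL
  obtain ⟨x, u, y, v, z, huv, hpump⟩ := hL.exists_pumping exists_mem_length_gt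
  obtain ⟨n₁, a₁, b₁, c₁, -⟩ := count_and_sorted_of_mem (hpump 1)
  obtain ⟨n₂, a₂, b₂, c₂, hsorted⟩ := count_and_sorted_of_mem (hpump 2)
  simp only [List.replicate_succ, List.replicate_zero, List.flatten_cons, List.flatten_nil,
    List.append_nil, List.count_append] at a₁ b₁ c₁ a₂ b₂ c₂ hsorted
  have hd₀ : (u ++ v).count 0 = n₂ - n₁ := by rw [List.count_append]; omega
  have hd₁ : (u ++ v).count 1 = n₂ - n₁ := by rw [List.count_append]; omega
  have hd₂ : (u ++ v).count 2 = 2 * (n₂ - n₁) := by rw [List.count_append]; omega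
  have hlt : n₁ < n₂ := by
    obtain ⟨e, he⟩ : ∃ e, e ∈ u ++ v := by
      rcases huv with h | h
      · exact (List.exists_mem_of_ne_nil u h).imp fun _ => List.mem_append_left v
      · exact (List.exists_mem_of_ne_nil v h).imp fun _ => List.mem_append_right u
    have := List.count_pos_iff.2 he
    fin_cases e <;> simp only [Fin.zero_eta, Fin.mk_one, Fin.reduceFinMk] at this <;> omega
  have hmem : ∀ e : Fin 3, e ∈ u ∨ e ∈ v := fun e => List.mem_append.1 <| List.count_pos_iff.1 <| by
    fin_cases e <;> simp only [Fin.zero_eta, Fin.mk_one, Fin.reduceFinMk] <;> omega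
  have hu : ∀ a ∈ u, ∀ b ∈ u, a = b := fun a ha b hb =>
    List.eq_of_mem_of_pairwise_append_self
      (hsorted.sublist (List.IsInfix.sublist ⟨x, y ++ (v ++ v) ++ z, by simp⟩)) ha hb
  have hv : ∀ a ∈ v, ∀ b ∈ v, a = b := fun a ha b hb =>
    List.eq_of_mem_of_pairwise_append_self
      (hsorted.sublist (List.IsInfix.sublist ⟨x ++ (u ++ u) ++ y, z, rfl⟩)) ha hb
  -- each of `u`, `v` holds a single letter, so `e ↦ (e ∈ u)` would inject three letters into `Bool`
  have hinj : Function.Injective fun e : Fin 3 => decide (e ∈ u) := by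
    intro a b hab
    by_cases ha : a ∈ u
    · exact hu a ha b (by simpa [ha] using hab)
    · have hb : b ∉ u := by simpa [ha] using hab
      exact hv a ((hmem a).resolve_left ha) b ((hmem b).resolve_left hb)
  simpa using Fintype.card_le_of_injective _ hinj

end Labc

/-- The non-context-free language `L_abc` belongs to `4SDA`;
consequently `4SDA ⊄ CFL`. -/
theorem Labc_mem_fourSDA :
    Labc ∈ kSDA 4 (Fin 3) ∧ ¬ Labc.IsContextFree ∧
      ¬ kSDA 4 (Fin 3) ⊆ {L : Language (Fin 3) | L.IsContextFree} :=
  ⟨Labc.mem_kSDA, Labc.not_isContextFree, fun h => Labc.not_isContextFree (h Labc.mem_kSDA)⟩
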